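/- arXiv:2102.09352 — 2 statements merged into one kernel-verified Lean document; each statement's English description precedes it below -/
import Mathlib

section
/- Let f ∈ Diff¹_ω(D) have finite order, i.e. f^p = id for some integer p ≥ 1. Then Cal₁(f) = 0; that is, ∫_D A dLeb = 0 for every normalized action function A of f. -/
open MeasureTheory Metric Set Filter Topology
open scoped Real

noncomputable section

/-- The closed unit disk in `ℂ ≅ ℝ²`. -/
def Disk : Set ℂ := Metric.closedBall 0 1

/-- The unit circle, boundary of the closed unit disk. -/
def Circ : Set ℂ := Metric.sphere 0 1

/-- The standard Liouville form `λ_z(w) = (z₁ w₂ - z₂ w₁)/(2π)`, whose exterior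
derivative is the normalized area form `ω = (1/π) du ∧ dv`. -/
def lform (z w : ℂ) : ℝ := (z.re * w.im - z.im * w.re) / (2 * Real.pi)

/-- An element of `Diff¹_ω(D)`: a `C¹` diffeomorphism of the closed unit disk onto itself
whose Jacobian determinant equals `1` at every point. -/
structure SympDiff where
  toFun : ℂ → ℂ
  invFun : ℂ → ℂ
  mapsTo : Set.MapsTo toFun Disk Disk
  inv_mapsTo : Set.MapsTo invFun Disk Disk
  left_inv : ∀ z ∈ Disk, invFun (toFun z) = z
  right_inv : ∀ z ∈ Disk, toFun (invFun z) = z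
  contDiffOn : ContDiffOn ℝ 1 toFun Disk
  inv_contDiffOn : ContDiffOn ℝ 1 invFun Disk
  jacobian : ∀ z ∈ Disk,
    LinearMap.det (fderivWithin ℝ toFun Disk z).toLinearMap = 1

/-- `A` is an action function of `f`: a `C¹` function with `dA = f*λ - λ` on the disk. -/
def IsAction (f : SympDiff) (A : ℂ → ℝ) : Prop :=
  ContDiffOn ℝ 1 A Disk ∧
    ∀ z ∈ Disk, ∀ w : ℂ,
      fderivWithin ℝ A Disk z w =
        lform (f.toFun z) (fderivWithin ℝ f.toFun Disk z w) - lform z w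

/-- `μ` is a Borel probability measure concentrated on the unit circle and invariant
under `f|_{S¹}`. -/
def IsInvariantCircleMeasure (f : SympDiff) (μ : Measure ℂ) : Prop :=
  IsProbabilityMeasure μ ∧ μ Circᶜ = 0 ∧ Measure.map f.toFun μ = μ

/-- `A` is a normalized action function of `f`: an action function whose integral over the
circle with respect to some `f|_{S¹}`-invariant probability measure vanishes. -/
def IsNormalizedAction (f : SympDiff) (A : ℂ → ℝ) : Prop :=
  IsAction f A ∧
    ∃ μ : Measure ℂ, IsInvariantCircleMeasure f μ ∧ ∫ z, A z ∂μ = 0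

/-- The `C⁰` distance between two disk diffeomorphisms (given with their inverses). -/
def d0 (f fi g gi : ℂ → ℂ) : ℝ :=
  max (⨆ z : Disk, ‖f (z : ℂ) - g (z : ℂ)‖) (⨆ z : Disk, ‖fi (z : ℂ) - gi (z : ℂ)‖)

/-- The `C¹` distance between two disk diffeomorphisms (given with their inverses). -/
def d1 (f fi g gi : ℂ → ℂ) : ℝ :=
  max (d0 f fi g gi)
    (max (⨆ z : Disk, ‖fderivWithin ℝ f Disk (z : ℂ) - fderivWithin ℝ g Disk (z : ℂ)‖)
      (⨆ z : Disk, ‖fderivWithin ℝ fi Disk (z : ℂ) - fderivWithin ℝ gi Disk (z : ℂ)‖))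

/-!
By the cocycle property of actions, the Birkhoff sum `S = ∑_{k<p} A ∘ f^k` is an action
function of `f^p = id`; hence `dS = 0` and `S` is a constant `c` on the disk. Integrating `S`
against the invariant circle measure `μ` normalizing `A` gives `c = p ∫ A dμ = 0`. Integrating it
against Lebesgue measure, which `f` preserves, gives `0 = ∫_D S = p ∫_D A`.
-/

section Action

variable {E : Type*} [NormedAddCommGroup E] [NormedSpace ℝ E]

/-- `S` is an action function of `g` on `s` for the (pointwise) 1-form `α`: `dS = g^*α - α`
on `s`, for some derivatives of `g` and `S` within `s`. -/
def IsActionOn (α : E → E → ℝ) (s : Set E) (g : E → E) (S : E → ℝ) : Prop :=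
  ∀ x ∈ s, ∃ (g' : E →L[ℝ] E) (S' : E →L[ℝ] ℝ), HasFDerivWithinAt g g' s x ∧
    HasFDerivWithinAt S S' s x ∧ ∀ w, S' w = α (g x) (g' w) - α x w

variable {α : E → E → ℝ} {s : Set E} {f g : E → E} {A B : E → ℝ}

theorem isActionOn_id : IsActionOn α s id 0 := fun x _ =>
  ⟨.id ℝ E, 0, hasFDerivWithinAt_id x s, hasFDerivWithinAt_const 0 x s, fun _ => by simp⟩

/-- Cocycle property of actions: `(f ∘ g)^*α - α = g^*(f^*α - α) + (g^*α - α)`. -/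
theorem IsActionOn.comp (hf : IsActionOn α s f A) (hg : IsActionOn α s g B)
    (hgs : MapsTo g s s) : IsActionOn α s (f ∘ g) (A ∘ g + B) := by
  intro x hx
  obtain ⟨g', B', hg', hB', hB⟩ := hg x hx
  obtain ⟨f', A', hf', hA', hA⟩ := hf (g x) (hgs hx)
  refine ⟨f'.comp g', A'.comp g' + B', hf'.comp x hg' hgs, (hA'.comp x hg' hgs).add hB',
    fun w => ?_⟩
  simp only [add_apply, ContinuousLinearMap.comp_apply, hA, hB, Function.comp_apply]
  ring

theorem IsActionOn.iterate (hf : IsActionOn α s f A) (hfs : MapsTo f s s) (n : ℕ) :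
    IsActionOn α s (f^[n]) (birkhoffSum f A n) := by
  induction n with
  | zero => simpa [birkhoffSum_zero'] using isActionOn_id
  | succ n ih =>
    have hsum : birkhoffSum f A (n + 1) = birkhoffSum f A n ∘ f + A :=
      funext fun x => (birkhoffSum_succ' f A n x).trans (add_comm _ _)
    rw [Function.iterate_succ, hsum]
    exact ih.comp hf hfs

/-- The derivative `α x ∘ g' - α x` of `A` vanishes on `s`, since `g' = id` by unique
differentiability. -/
theorem IsActionOn.eq_of_eqOn_id (hA : IsActionOn α s g A) (hconv : Convex ℝ s)
    (hs : UniqueDiffOn ℝ s) (hg : EqOn g id s) {x y : E} (hx : x ∈ s) (hy : y ∈ s) :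
    A x = A y := by
  have hderiv : ∀ z ∈ s, HasFDerivWithinAt A (0 : E →L[ℝ] ℝ) s z := by
    intro z hz
    obtain ⟨g', A', hg', hA', hA'_eq⟩ := hA z hz
    have hg'_id : g' = .id ℝ E := (hs z hz).eq hg' ((hasFDerivWithinAt_id z s).congr hg (hg hz))
    convert hA' using 1
    ext w
    simp [hA'_eq, hg'_id, hg hz]
  simpa [sub_eq_zero, eq_comm] using
    hconv.norm_image_sub_le_of_norm_hasFDerivWithin_le hderiv (fun _ _ => le_of_eq norm_zero) hx hy

end Action

section Integral

variable {X E : Type*} [TopologicalSpace X] [MeasurableSpace X] [NormedAddCommGroup E]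
  [NormedSpace ℝ E] {μ : Measure X} {s : Set X} {f : X → X} {g : X → E}

theorem integral_comp_iterate_of_continuousOn (hfs : MapsTo f s s) (hf : ContinuousOn f s)
    (hinv : ∀ g : X → E, ContinuousOn g s → ∫ x, g (f x) ∂μ = ∫ x, g x ∂μ)
    (hg : ContinuousOn g s) (k : ℕ) : ∫ x, g (f^[k] x) ∂μ = ∫ x, g x ∂μ := by
  induction k with
  | zero => rfl
  | succ k ih =>
    simp only [Function.iterate_succ_apply]
    exact (hinv _ (hg.comp (hf.iterate hfs k) (hfs.iterate k))).trans ih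

theorem integral_birkhoffSum_of_continuousOn [T2Space X] [OpensMeasurableSpace X]
    [IsFiniteMeasureOnCompacts μ] (hs : IsCompact s)
    (hμs : ∀ᵐ x ∂μ, x ∈ s) (hfs : MapsTo f s s) (hf : ContinuousOn f s)
    (hinv : ∀ g : X → E, ContinuousOn g s → ∫ x, g (f x) ∂μ = ∫ x, g x ∂μ)
    (hg : ContinuousOn g s) (n : ℕ) :
    ∫ x, birkhoffSum f g n x ∂μ = n • ∫ x, g x ∂μ := by
  have hint : ∀ k, Integrable (fun x => g (f^[k] x)) μ := fun k => by
    rw [← Measure.restrict_eq_self_of_ae_mem hμs]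
    exact (hg.comp (hf.iterate hfs k) (hfs.iterate k)).integrableOn_compact hs
  simp only [birkhoffSum]
  rw [integral_finsetSum _ fun k _ => hint k]
  simp [integral_comp_iterate_of_continuousOn hfs hf hinv hg]

end Integral

theorem convex_disk : Convex ℝ Disk := convex_closedBall 0 1

theorem isCompact_disk : IsCompact Disk := isCompact_closedBall 0 1

theorem measurableSet_disk : MeasurableSet Disk := measurableSet_closedBall

theorem uniqueDiffOn_disk : UniqueDiffOn ℝ Disk :=
  uniqueDiffOn_convex convex_disk <| by
    rw [Disk, interior_closedBall (0 : ℂ) one_ne_zero]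
    exact ⟨0, by simp⟩

theorem IsAction.isActionOn {f : SympDiff} {A : ℂ → ℝ} (hA : IsAction f A) :
    IsActionOn lform Disk f.toFun A := fun z hz =>
  ⟨_, _, (f.contDiffOn.differentiableOn one_ne_zero z hz).hasFDerivWithinAt,
    (hA.1.differentiableOn one_ne_zero z hz).hasFDerivWithinAt, hA.2 z hz⟩

theorem SympDiff.setIntegral_comp {E : Type*} [NormedAddCommGroup E] [NormedSpace ℝ E]
    (f : SympDiff) (g : ℂ → E) : ∫ z in Disk, g (f.toFun z) = ∫ z in Disk, g z := by
  have himage : f.toFun '' Disk = Disk :=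
    f.mapsTo.image_subset.antisymm fun z hz => ⟨f.invFun z, f.inv_mapsTo hz, f.right_inv z hz⟩
  have hinj : InjOn f.toFun Disk := (show LeftInvOn f.invFun f.toFun Disk from f.left_inv).injOn
  have hcov := integral_image_eq_integral_abs_det_fderiv_smul volume measurableSet_disk
    (fun z hz => (f.contDiffOn.differentiableOn one_ne_zero z hz).hasFDerivWithinAt) hinj g
  rw [himage] at hcov
  rw [hcov]
  refine setIntegral_congr_fun measurableSet_disk fun z hz => ?_
  simp [ContinuousLinearMap.det, f.jacobian z hz]

namespace IsInvariantCircleMeasure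

variable {f : SympDiff} {μ : Measure ℂ}

theorem ae_mem_disk (hμ : IsInvariantCircleMeasure f μ) : ∀ᵐ z ∂μ, z ∈ Disk :=
  measure_mono_null (compl_subset_compl.mpr sphere_subset_closedBall) hμ.2.1

theorem integral_comp (hμ : IsInvariantCircleMeasure f μ) {g : ℂ → ℝ}
    (hg : ContinuousOn g Disk) : ∫ z, g (f.toFun z) ∂μ = ∫ z, g z ∂μ := by
  have hrestrict : μ.restrict Disk = μ := Measure.restrict_eq_self_of_ae_mem hμ.ae_mem_disk
  have hf : AEMeasurable f.toFun μ :=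
    hrestrict ▸ f.contDiffOn.continuousOn.aemeasurable measurableSet_disk
  have hg_meas : AEStronglyMeasurable g (μ.map f.toFun) := by
    rw [hμ.2.2, ← hrestrict]
    exact hg.aestronglyMeasurable measurableSet_disk
  rw [← integral_map hf hg_meas, hμ.2.2]

end IsInvariantCircleMeasure

/-- The Calabi invariant of a finite order element of `Diff¹_ω(D)`
vanishes. -/
theorem cal_finite_order (f : SympDiff) (p : ℕ) (hp : 1 ≤ p)
    (hper : ∀ z ∈ Disk, f.toFun^[p] z = z)
    (A : ℂ → ℝ) (hA : IsNormalizedAction f A) :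
    ∫ z in Disk, A z = 0 := by
  obtain ⟨hAct, μ, hμ, hμA⟩ := hA
  have hμprob : IsProbabilityMeasure μ := hμ.1
  have hA_cont : ContinuousOn A Disk := hAct.1.continuousOn
  have hf_cont : ContinuousOn f.toFun Disk := f.contDiffOn.continuousOn
  have hzero_mem : (0 : ℂ) ∈ Disk := mem_closedBall_self zero_le_one
  have hS_const : ∀ z ∈ Disk, birkhoffSum f.toFun A p z = birkhoffSum f.toFun A p 0 :=
    fun z hz => (hAct.isActionOn.iterate f.mapsTo p).eq_of_eqOn_id convex_disk
      uniqueDiffOn_disk hper hz hzero_mem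
  have hS_zero : birkhoffSum f.toFun A p 0 = 0 := by
    have hμS := integral_birkhoffSum_of_continuousOn isCompact_disk hμ.ae_mem_disk
      f.mapsTo hf_cont (fun _ => hμ.integral_comp) hA_cont p
    rwa [hμA, smul_zero, integral_congr_ae (hμ.ae_mem_disk.mono hS_const), integral_const,
      probReal_univ, one_smul] at hμS
  have hvol := integral_birkhoffSum_of_continuousOn (μ := volume.restrict Disk)
    isCompact_disk (ae_restrict_mem measurableSet_disk) f.mapsTo hf_cont
    (fun g _ => f.setIntegral_comp g) hA_cont p
  rw [setIntegral_congr_fun measurableSet_disk fun z hz => (hS_const z hz).trans hS_zero,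
    integral_zero, eq_comm, smul_eq_zero] at hvol
  exact hvol.resolve_left (by omega)
end
end

section
/- The set {(x,y) ∈ D × D : x ≠ y} is path-connected, and for every real δ with 0 < δ ≤ 2 the set {(x,y) ∈ D × D : ‖x − y‖ ≥ δ} is path-connected. -/
open MeasureTheory Metric Set Filter Topology
open scoped Real

noncomputable section

/-! Every pair `(x, y)` at distance `≥ δ` in a ball slides, keeping `x - y` fixed, to the
antipodal pair `(v, -v)` with `v = (x - y) / 2`; antipodal pairs with `δ / 2 ≤ ‖v‖ ≤ r`
form a continuous image of an annulus, which is path-connected once the dimension is at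
least two. The off-diagonal set is the union over `δ > 0` of the sets of pairs at distance
`≥ δ`, and any two of its points already lie in a common one. -/

def separatedPairs {E : Type*} [SeminormedAddCommGroup E] (K : Set E) (δ : ℝ) : Set (E × E) :=
  {p | p.1 ∈ K ∧ p.2 ∈ K ∧ δ ≤ ‖p.1 - p.2‖}

theorem separatedPairs_subset_offDiag {E : Type*} [SeminormedAddCommGroup E] (K : Set E)
    {δ : ℝ} (hδ : 0 < δ) :
    separatedPairs K δ ⊆ K.offDiag := by
  rintro ⟨x, y⟩ ⟨hx, hy, hxy⟩
  refine ⟨hx, hy, ?_⟩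
  rintro (rfl : x = y)
  rw [sub_self, norm_zero] at hxy
  exact hxy.not_gt hδ

theorem IsPathConnected.of_subset_of_forall_joinedIn {X : Type*} [TopologicalSpace X]
    {F G : Set X} (hG : IsPathConnected G) (hGF : G ⊆ F)
    (h : ∀ x ∈ F, ∃ y ∈ G, JoinedIn F x y) : IsPathConnected F := by
  obtain ⟨g, hg, hgG⟩ := hG
  refine ⟨g, hGF hg, fun x hx ↦ ?_⟩
  obtain ⟨y, hy, hxy⟩ := h x hx
  exact ((hgG hy).mono hGF).trans hxy.symm

section NormedSpace

variable {E : Type*} [NormedAddCommGroup E] [NormedSpace ℝ E]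

theorem segment_subset_separatedPairs {K : Set E} (hK : Convex ℝ K) (hKneg : ∀ x ∈ K, -x ∈ K)
    {δ : ℝ} {x y : E} (hxy : (x, y) ∈ separatedPairs K δ) :
    segment ℝ (x, y) ((2⁻¹ : ℝ) • (x - y), -((2⁻¹ : ℝ) • (x - y))) ⊆ separatedPairs K δ := by
  obtain ⟨hx, hy, hδ⟩ := hxy
  set v : E := (2⁻¹ : ℝ) • (x - y)
  have hv : v ∈ K := by
    have hv_eq : v = (2⁻¹ : ℝ) • x + (2⁻¹ : ℝ) • -y := by simp only [v]; module
    rw [hv_eq]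
    exact hK hx (hKneg y hy) (by norm_num) (by norm_num) (by norm_num)
  rintro _ ⟨a, b, ha, hb, hab, rfl⟩
  refine ⟨hK hx hv ha hb hab, hK hy (hKneg v hv) ha hb hab, ?_⟩
  have hdiff : a • x + b • v - (a • y + b • -v) = (a + b) • (x - y) := by
    simp only [v]; module
  show δ ≤ ‖a • x + b • v - (a • y + b • -v)‖
  rwa [hdiff, hab, one_smul]

theorem isPathConnected_annulus (hE : 1 < Module.rank ℝ E) {a b : ℝ} (ha : 0 < a) (hab : a ≤ b) :
    IsPathConnected {v : E | a ≤ ‖v‖ ∧ ‖v‖ ≤ b} := by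
  have hsphere := isPathConnected_sphere hE (0 : E) zero_le_one
  have hIcc := (convex_Icc a b).isPathConnected (nonempty_Icc.2 hab)
  convert (hsphere.prod hIcc).image (f := fun q : E × ℝ ↦ q.2 • q.1) (by fun_prop)
  ext v
  constructor
  · rintro ⟨hav, hvb⟩
    have hv : 0 < ‖v‖ := ha.trans_le hav
    refine ⟨(‖v‖⁻¹ • v, ‖v‖), ⟨?_, hav, hvb⟩, ?_⟩
    · simp [norm_smul, hv.ne']
    · simp [smul_smul, hv.ne']
  · rintro ⟨⟨u, s⟩, ⟨hu, has, hsb⟩, rfl⟩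
    rw [mem_sphere_zero_iff_norm] at hu
    have : ‖s • u‖ = s := by rw [norm_smul, hu, mul_one, Real.norm_of_nonneg (ha.le.trans has)]
    simp only [mem_ofPred_eq, this]
    exact ⟨has, hsb⟩

theorem isPathConnected_separatedPairs_closedBall (hE : 1 < Module.rank ℝ E) {r δ : ℝ}
    (hδ : 0 < δ) (hδr : δ ≤ 2 * r) :
    IsPathConnected (separatedPairs (closedBall (0 : E) r) δ) := by
  have hball : Convex ℝ (closedBall (0 : E) r) := convex_closedBall 0 r
  have hneg : ∀ x ∈ closedBall (0 : E) r, -x ∈ closedBall (0 : E) r := by simp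
  have hA := (isPathConnected_annulus hE (half_pos hδ) (by linarith : δ / 2 ≤ r)).image
    (f := fun v : E ↦ (v, -v)) (by fun_prop)
  refine hA.of_subset_of_forall_joinedIn ?_ ?_
  · rintro _ ⟨v, ⟨hδv, hvr⟩, rfl⟩
    refine ⟨by simpa using hvr, by simpa using hvr, ?_⟩
    rw [sub_neg_eq_add, ← two_smul ℝ, norm_smul, Real.norm_two]
    linarith
  · rintro ⟨x, y⟩ hxy
    refine ⟨_, ⟨(2⁻¹ : ℝ) • (x - y), ?_, rfl⟩,
      .of_segment_subset (segment_subset_separatedPairs hball hneg hxy)⟩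
    obtain ⟨hx, hy, hδxy⟩ := hxy
    rw [mem_closedBall_zero_iff] at hx hy
    have hnorm : ‖(2⁻¹ : ℝ) • (x - y)‖ = ‖x - y‖ / 2 := by
      rw [norm_smul, Real.norm_of_nonneg (by norm_num)]; ring
    have := norm_sub_le x y
    constructor <;> linarith

theorem isPathConnected_offDiag_closedBall (hE : 1 < Module.rank ℝ E) {r : ℝ} (hr : 0 < r) :
    IsPathConnected (closedBall (0 : E) r).offDiag := by
  have hmax := isPathConnected_separatedPairs_closedBall hE (mul_pos two_pos hr) le_rfl
  refine isPathConnected_iff.2 ⟨hmax.nonempty.mono (separatedPairs_subset_offDiag _ ?_), ?_⟩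
  · positivity
  rintro ⟨x₁, x₂⟩ ⟨hx₁, hx₂, hx⟩ ⟨y₁, y₂⟩ ⟨hy₁, hy₂, hy⟩
  set δ := min ‖x₁ - x₂‖ ‖y₁ - y₂‖
  have hδ : 0 < δ := lt_min (norm_pos_iff.2 (sub_ne_zero.2 hx)) (norm_pos_iff.2 (sub_ne_zero.2 hy))
  have hδr : δ ≤ 2 * r := by
    rw [mem_closedBall_zero_iff] at hx₁ hx₂
    linarith [min_le_left ‖x₁ - x₂‖ ‖y₁ - y₂‖, norm_sub_le x₁ x₂]
  refine (isPathConnected_separatedPairs_closedBall hE hδ hδr).joinedIn _ ?_ _ ?_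
    |>.mono (separatedPairs_subset_offDiag _ hδ)
  · exact ⟨hx₁, hx₂, min_le_left _ _⟩
  · exact ⟨hy₁, hy₂, min_le_right _ _⟩

end NormedSpace

/-- The complement of the diagonal in `D × D` is path-connected, and so
is the set of pairs of points of `D` at distance at least `δ`, for every `0 < δ ≤ 2`. -/
theorem offdiag_pathConnected :
    IsPathConnected {p : ℂ × ℂ | p.1 ∈ Disk ∧ p.2 ∈ Disk ∧ p.1 ≠ p.2} ∧
      ∀ δ : ℝ, 0 < δ → δ ≤ 2 →
        IsPathConnected {p : ℂ × ℂ | p.1 ∈ Disk ∧ p.2 ∈ Disk ∧ δ ≤ ‖p.1 - p.2‖} := by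
  have hC : 1 < Module.rank ℝ ℂ := Complex.rank_real_complex ▸ Nat.one_lt_ofNat
  exact ⟨isPathConnected_offDiag_closedBall hC one_pos, fun δ hδ hδ2 ↦
    isPathConnected_separatedPairs_closedBall hC hδ (by linarith)⟩
end
end
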